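/- For any nonnegative continuous function φ on a compact convex set Ω̄ ⊂ ℝ², and any Lipschitz curve σ : [0,1] → Ω̄, the weighted length L_φ(σ) := ∫₀¹ φ(σ(t))|σ'(t)| dt equals the supremum, over all subdivisions 0 = t₁ < t₂ < ... < t_{n+1} = 1 of [0,1], of Σᵢ (inf_{t ∈ [tᵢ, tᵢ₊₁]} φ(σ(t))) · |σ(tᵢ₊₁) − σ(tᵢ)|. -/

import Mathlib

open MeasureTheory Set Filter Topology
noncomputable section

abbrev E2 : Type := EuclideanSpace ℝ (Fin 2)
abbrev Curves : Type := C(ℝ, E2)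
instance : MeasurableSpace Curves := borel Curves
instance : BorelSpace Curves := ⟨rfl⟩

/-- Weighted length `L_φ(σ) = ∫₀¹ φ(σ(t)) |σ'(t)| dt`. -/
def Lw (φ : E2 → ℝ) (σ : ℝ → E2) : ℝ := ∫ t in (0:ℝ)..1, φ (σ t) * ‖deriv σ t‖

/-- Length of a curve. -/
def len (σ : ℝ → E2) : ℝ := ∫ t in (0:ℝ)..1, ‖deriv σ t‖

/-- A Lipschitz curve valued in `Ωb`. -/
def IsCurveIn (Ωb : Set E2) (σ : ℝ → E2) : Prop :=
  (∃ K : NNReal, LipschitzOnWith K σ (Icc 0 1)) ∧ ∀ t ∈ Icc (0:ℝ) 1, σ t ∈ Ωb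

/-- `ι` is the traffic intensity of `Q`. -/
def IsIntensity (Q : Measure Curves) (ι : Measure E2) : Prop :=
  ∀ φ : C(E2, ℝ), ∫ x, φ x ∂ι = ∫ σ, Lw φ (⇑σ) ∂Q

/-- Geodesic cost associated to a metric `ξ`. -/
def cost (Ωb : Set E2) (ξ : E2 → ℝ) (x y : E2) : ℝ :=
  sInf {v : ℝ | ∃ σ : ℝ → E2, IsCurveIn Ωb σ ∧ σ 0 = x ∧ σ 1 = y ∧ v = Lw ξ σ}

/-- `ξₙ → ξ` in `L^p(Ω)`. -/
def LqTendsto (Ω : Set E2) (p : ℝ) (ξn : ℕ → E2 → ℝ) (ξ : E2 → ℝ) : Prop :=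
  Tendsto (fun n => eLpNorm (fun x => ξn n x - ξ x) (ENNReal.ofReal p) (volume.restrict Ω))
    atTop (𝓝 0)

/-- The set `A(ξ)` of uniform limits of costs along approximating sequences. -/
def relLimits (Ω : Set E2) (p : ℝ) (ξ : E2 → ℝ) : Set (E2 × E2 → ℝ) :=
  {c | ∃ ξn : ℕ → C(E2, ℝ), (∀ n x, 0 ≤ ξn n x) ∧ LqTendsto Ω p (fun n x => ξn n x) ξ ∧
    TendstoUniformlyOn (fun n z => cost (closure Ω) (⇑(ξn n)) z.1 z.2) c atTop
      (closure Ω ×ˢ closure Ω)}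

/-- Relaxed geodesic cost `c̄_ξ`. -/
def cbar (Ω : Set E2) (p : ℝ) (ξ : E2 → ℝ) (x y : E2) : ℝ :=
  sSup {v : ℝ | ∃ c ∈ relLimits Ω p ξ, v = c (x, y)}

/-- Membership in `Q^q(μ₀,μ₁)` with density witness `f` for the traffic intensity. -/
def InQq (Ω : Set E2) (μ0 μ1 : Measure E2) (q : ℝ) (Q : Measure Curves) (f : E2 → ℝ) : Prop :=
  IsProbabilityMeasure Q ∧
  Q {σ : Curves | IsCurveIn (closure Ω) ⇑σ} = 1 ∧
  Q.map (fun σ : Curves => σ 0) = μ0 ∧ Q.map (fun σ : Curves => σ 1) = μ1 ∧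
  MemLp f (ENNReal.ofReal q) (volume.restrict Ω) ∧
  (∀ᵐ x ∂(volume.restrict Ω), 0 ≤ f x) ∧
  ∀ φ : C(E2, ℝ), ∫ x in Ω, φ x * f x = ∫ σ, Lw φ (⇑σ) ∂Q

/-- The `L¹(C,Q)` extension of the weighted length to an `L^{q*}` metric `ξ`. -/
def IsLext (Ω : Set E2) (p : ℝ) (ξ : E2 → ℝ) (Q : Measure Curves) (Lext : Curves → ℝ) : Prop :=
  ∀ ξn : ℕ → C(E2, ℝ), (∀ n x, 0 ≤ ξn n x) → LqTendsto Ω p (fun n x => ξn n x) ξ →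
    Tendsto (fun n => ∫ σ, |Lw (⇑(ξn n)) ⇑σ - Lext σ| ∂Q) atTop (𝓝 0)

/-- Legendre–Fenchel transform of `H` on `ℝ₊`. -/
def Hstar (H : ℝ → ℝ) (w : ℝ) : ℝ := sSup {v : ℝ | ∃ z : ℝ, 0 ≤ z ∧ v = z * w - H z}


/-!
Upper bound: for a Lipschitz curve, `‖σ b - σ a‖ ≤ ∫_a^b ‖σ'‖` (the scalar fundamental theorem
of calculus for absolutely continuous functions, applied to `ℓ ∘ σ` for a norming functional `ℓ`),
so each term `inf_{[a,b]} ψ · ‖σ b - σ a‖` is at most `∫_a^b ψ ‖σ'‖`, where `ψ = φ ∘ σ ≥ 0`.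

Lower bound: on a subdivision of mesh `≤ δ`, `ψ` varies by at most `ε` on each piece, so
`∫ ψ ‖σ'‖` exceeds the subdivision sum by at most `ε L + M (L - Σ ‖σ (tᵢ₊₁) - σ tᵢ‖)`, where
`L = ∫ ‖σ'‖` and `M = sup ψ`. To make the last defect small, average the polygonal length over
all shifts of the grid of step `h`: the mean is `∫ ‖σ (x + h) - σ x‖ / h`, which tends to `L`
by dominated convergence, so some shifted grid has polygonal length close to `L`.
-/

open intervalIntegral

theorem exists_integral_le_mul_sum_shift {f : ℝ → ℝ} (hf : Continuous f) {h : ℝ} (hh : 0 < h)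
    (a : ℝ) (n : ℕ) :
    ∃ s ∈ Icc 0 h, ∫ x in a..a + n * h, f x ≤ h * ∑ i ∈ Finset.range n, f (a + s + i * h) := by
  set G : ℝ → ℝ := fun s => ∑ i ∈ Finset.range n, f (a + s + i * h)
  have hG : Continuous G := continuous_finsetSum _ fun i _ => hf.comp (by fun_prop)
  obtain ⟨s, hs, hmax⟩ := isCompact_Icc.exists_isMaxOn (nonempty_Icc.2 hh.le) hG.continuousOn
  refine ⟨s, hs, ?_⟩
  have hshift (i : ℕ) :
      ∫ u in 0..h, f (a + u + i * h) = ∫ x in a + i * h..a + (i + 1 : ℕ) * h, f x := by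
    simp_rw [show ∀ u, a + u + i * h = u + (a + i * h) from fun u => by ring,
      integral_comp_add_right]
    congr 1 <;> push_cast <;> ring
  have hint (i : ℕ) : IntervalIntegrable (fun u => f (a + u + i * h)) volume 0 h :=
    (hf.comp (by fun_prop)).intervalIntegrable _ _
  calc ∫ x in a..a + n * h, f x
      = ∑ i ∈ Finset.range n, ∫ x in a + i * h..a + (i + 1 : ℕ) * h, f x := by
        rw [sum_integral_adjacent_intervals (a := fun i : ℕ => a + i * h)
          fun i _ => hf.intervalIntegrable _ _]
        simp
    _ = ∫ u in 0..h, G u := by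
        rw [intervalIntegral.integral_finsetSum fun i _ => hint i]
        simp only [hshift]
    _ ≤ ∫ _ in 0..h, G s :=
        integral_mono_on hh.le (hG.intervalIntegrable _ _) intervalIntegrable_const
          fun u hu => hmax hu
    _ = h * G s := by simp

section LipschitzCurve

variable {E : Type*} [NormedAddCommGroup E] [NormedSpace ℝ E] {K : NNReal} {σ : ℝ → E}
  {ψ : ℝ → ℝ} {a b : ℝ}

theorem LipschitzOnWith.intervalIntegrable_norm_deriv [CompleteSpace E]
    (hσ : LipschitzOnWith K σ (Icc a b)) (hab : a ≤ b) :
    IntervalIntegrable (fun t => ‖deriv σ t‖) volume a b := by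
  rw [intervalIntegrable_iff_integrableOn_Ioo_of_le hab]
  refine IntegrableOn.of_bound measure_Ioo_lt_top
    (stronglyMeasurable_deriv σ).norm.aestronglyMeasurable K ?_
  filter_upwards [ae_restrict_mem measurableSet_Ioo] with t ht
  rw [norm_norm]
  exact norm_deriv_le_of_lipschitzOn (Icc_mem_nhds ht.1 ht.2) hσ

theorem LipschitzOnWith.intervalIntegrable_mul_norm_deriv [CompleteSpace E]
    (hσ : LipschitzOnWith K σ (Icc a b)) (hab : a ≤ b) (hψ : ContinuousOn ψ (Icc a b)) :
    IntervalIntegrable (fun t => ψ t * ‖deriv σ t‖) volume a b :=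
  (hσ.intervalIntegrable_norm_deriv hab).continuousOn_mul (by rwa [uIcc_of_le hab])

theorem LipschitzOnWith.norm_sub_le_integral_norm_deriv [FiniteDimensional ℝ E]
    (hσ : LipschitzOnWith K σ (Icc a b)) (hab : a ≤ b) :
    ‖σ b - σ a‖ ≤ ∫ t in a..b, ‖deriv σ t‖ := by
  obtain ⟨ℓ, hℓ1, hℓ⟩ := exists_dual_vector'' ℝ (σ b - σ a)
  have hℓσ : LipschitzOnWith (‖ℓ‖₊ * K) (ℓ ∘ σ) (uIcc a b) := by
    rw [uIcc_of_le hab]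
    exact ℓ.lipschitz.comp_lipschitzOnWith hσ
  have hderiv : ∀ᵐ t ∂volume.restrict (Icc a b), deriv (ℓ ∘ σ) t ≤ ‖deriv σ t‖ := by
    rw [← Measure.restrict_congr_set Ioo_ae_eq_Icc]
    filter_upwards [ae_restrict_mem measurableSet_Ioo,
      (hσ.mono Ioo_subset_Icc_self).ae_differentiableWithinAt_real measurableSet_Ioo]
      with t ht hdiff
    have hd := hdiff.differentiableAt (Ioo_mem_nhds ht.1 ht.2)
    rw [(ℓ.hasFDerivAt.comp_hasDerivAt t hd.hasDerivAt).deriv]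
    calc ℓ (deriv σ t) ≤ ‖ℓ‖ * ‖deriv σ t‖ := (le_abs_self _).trans (ℓ.le_opNorm _)
      _ ≤ ‖deriv σ t‖ := mul_le_of_le_one_left (norm_nonneg _) hℓ1
  calc ‖σ b - σ a‖ = (ℓ ∘ σ) b - (ℓ ∘ σ) a := by
        rw [Function.comp_apply, Function.comp_apply, ← map_sub, hℓ]; rfl
    _ = ∫ t in a..b, deriv (ℓ ∘ σ) t :=
      hℓσ.absolutelyContinuousOnInterval.integral_deriv_eq_sub.symm
    _ ≤ ∫ t in a..b, ‖deriv σ t‖ :=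
      integral_mono_ae_restrict hab hℓσ.absolutelyContinuousOnInterval.intervalIntegrable_deriv
        (hσ.intervalIntegrable_norm_deriv hab) hderiv

theorem LipschitzOnWith.sInf_image_mul_norm_sub_le_integral [FiniteDimensional ℝ E]
    (hσ : LipschitzOnWith K σ (Icc a b)) (hab : a ≤ b) (hψ : ContinuousOn ψ (Icc a b))
    (hψ0 : ∀ u ∈ Icc a b, 0 ≤ ψ u) :
    sInf (ψ '' Icc a b) * ‖σ b - σ a‖ ≤ ∫ t in a..b, ψ t * ‖deriv σ t‖ := by
  have hbdd : BddBelow (ψ '' Icc a b) := (isCompact_Icc.image_of_continuousOn hψ).bddBelow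
  have hm0 : 0 ≤ sInf (ψ '' Icc a b) := Real.sInf_nonneg (forall_mem_image.2 hψ0)
  calc sInf (ψ '' Icc a b) * ‖σ b - σ a‖
      ≤ sInf (ψ '' Icc a b) * ∫ t in a..b, ‖deriv σ t‖ :=
        mul_le_mul_of_nonneg_left (hσ.norm_sub_le_integral_norm_deriv hab) hm0
    _ = ∫ t in a..b, sInf (ψ '' Icc a b) * ‖deriv σ t‖ :=
        (intervalIntegral.integral_const_mul _ _).symm
    _ ≤ ∫ t in a..b, ψ t * ‖deriv σ t‖ :=
        integral_mono_on hab ((hσ.intervalIntegrable_norm_deriv hab).const_mul _)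
          (hσ.intervalIntegrable_mul_norm_deriv hab hψ) fun u hu =>
            mul_le_mul_of_nonneg_right (csInf_le hbdd (mem_image_of_mem ψ hu)) (norm_nonneg _)

theorem LipschitzOnWith.integral_mul_norm_deriv_le [FiniteDimensional ℝ E] {M ε : ℝ}
    (hσ : LipschitzOnWith K σ (Icc a b)) (hab : a ≤ b) (hψ : ContinuousOn ψ (Icc a b))
    (hM : ∀ u ∈ Icc a b, ψ u ≤ M) (hosc : ∀ u ∈ Icc a b, ∀ w ∈ Icc a b, ψ u ≤ ψ w + ε) :
    ∫ t in a..b, ψ t * ‖deriv σ t‖ ≤ sInf (ψ '' Icc a b) * ‖σ b - σ a‖ +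
      M * ((∫ t in a..b, ‖deriv σ t‖) - ‖σ b - σ a‖) + ε * ∫ t in a..b, ‖deriv σ t‖ := by
  set m := sInf (ψ '' Icc a b)
  have hbdd : BddBelow (ψ '' Icc a b) := (isCompact_Icc.image_of_continuousOn hψ).bddBelow
  have hmM : m ≤ M := (csInf_le hbdd (mem_image_of_mem ψ (left_mem_Icc.2 hab))).trans
    (hM a (left_mem_Icc.2 hab))
  have hψm : ∀ u ∈ Icc a b, ψ u ≤ m + ε := fun u hu => sub_le_iff_le_add.1 <|
    le_csInf ((nonempty_Icc.2 hab).image ψ) <| forall_mem_image.2 fun w hw =>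
      sub_le_iff_le_add.2 (hosc u hu w hw)
  have hdefect := sub_nonneg.2 (hσ.norm_sub_le_integral_norm_deriv hab)
  calc ∫ t in a..b, ψ t * ‖deriv σ t‖ ≤ ∫ t in a..b, (m + ε) * ‖deriv σ t‖ :=
        integral_mono_on hab (hσ.intervalIntegrable_mul_norm_deriv hab hψ)
          ((hσ.intervalIntegrable_norm_deriv hab).const_mul _) fun u hu =>
            mul_le_mul_of_nonneg_right (hψm u hu) (norm_nonneg _)
    _ = (m + ε) * ∫ t in a..b, ‖deriv σ t‖ := intervalIntegral.integral_const_mul _ _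
    _ ≤ _ := by nlinarith [mul_le_mul_of_nonneg_right hmM hdefect]

theorem LipschitzWith.tendsto_integral_norm_sub_div [FiniteDimensional ℝ E]
    (hσ : LipschitzWith K σ) (a b : ℝ) :
    Tendsto (fun h => ∫ t in a..b, ‖σ (t + h) - σ t‖ / h) (𝓝[>] 0)
      (𝓝 (∫ t in a..b, ‖deriv σ t‖)) := by
  refine tendsto_integral_filter_of_dominated_convergence (fun _ => (K : ℝ))
    (Eventually.of_forall fun h => ?_) ?_ intervalIntegrable_const ?_
  · exact ((hσ.continuous.comp (continuous_add_const h)).sub hσ.continuous).norm.div_const h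
      |>.aestronglyMeasurable
  · filter_upwards [self_mem_nhdsWithin] with h (hh : 0 < h)
    refine Eventually.of_forall fun t _ => ?_
    rw [Real.norm_of_nonneg (by positivity), div_le_iff₀ hh]
    simpa [dist_eq_norm, abs_of_pos hh] using hσ.dist_le_mul (t + h) t
  · filter_upwards [hσ.ae_differentiableAt_real] with t ht _
    refine ht.hasDerivAt.tendsto_slope_zero_right.norm.congr' ?_
    filter_upwards [self_mem_nhdsWithin] with h (hh : 0 < h)
    rw [norm_smul, norm_inv, Real.norm_of_nonneg hh.le, inv_mul_eq_div]

theorem LipschitzWith.exists_grid_integral_norm_deriv_le [FiniteDimensional ℝ E]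
    (hσ : LipschitzWith K σ) {δ ε : ℝ} (hδ : 0 < δ) (hε : 0 < ε) :
    ∃ m : ℕ, 0 < m ∧ (m : ℝ)⁻¹ ≤ δ ∧ ∃ s ∈ Icc (-(m : ℝ)⁻¹) 0,
      ∫ x in 0..1, ‖deriv σ x‖ ≤
        ∑ i ∈ Finset.range (m + 1), ‖σ (s + (i + 1) * (m : ℝ)⁻¹) - σ (s + i * (m : ℝ)⁻¹)‖ + ε := by
  have hinv : Tendsto (fun m : ℕ => (m : ℝ)⁻¹) atTop (𝓝[>] 0) :=
    tendsto_inv_atTop_nhdsGT_zero.comp tendsto_natCast_atTop_atTop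
  obtain ⟨m, hm, hmδ, hslope⟩ := ((eventually_gt_atTop 0).and
    (((hinv.mono_right nhdsWithin_le_nhds).eventually (eventually_le_nhds hδ)).and
      (hinv.eventually ((hσ.tendsto_integral_norm_sub_div 0 1).eventually
        (eventually_ge_nhds (sub_lt_self _ hε)))))).exists
  set h : ℝ := (m : ℝ)⁻¹
  have hh : 0 < h := inv_pos.2 (Nat.cast_pos.2 hm)
  have hmh : (m : ℝ) * h = 1 := mul_inv_cancel₀ (Nat.cast_ne_zero.2 hm.ne')
  set f : ℝ → ℝ := fun x => ‖σ (x + h) - σ x‖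
  have hf : Continuous f :=
    ((hσ.continuous.comp (continuous_add_const h)).sub hσ.continuous).norm
  obtain ⟨s, hs, hsum⟩ := exists_integral_le_mul_sum_shift hf hh (-h) (m + 1)
  refine ⟨m, hm, hmδ, -h + s, ⟨by linarith [hs.1], by linarith [hs.2]⟩, ?_⟩
  have hgrid : ∑ i ∈ Finset.range (m + 1), f (-h + s + i * h) =
      ∑ i ∈ Finset.range (m + 1), ‖σ (-h + s + (i + 1) * h) - σ (-h + s + i * h)‖ := by
    simp only [f, add_mul, one_mul, add_assoc]
  have hcover : ∫ x in 0..1, f x ≤ ∫ x in -h..-h + (m + 1 : ℕ) * h, f x :=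
    integral_mono_interval (by linarith) zero_le_one (by push_cast; linarith)
      (Eventually.of_forall fun x => norm_nonneg _) (hf.intervalIntegrable _ _)
  rw [← hgrid]
  calc ∫ x in 0..1, ‖deriv σ x‖ ≤ (∫ x in 0..1, f x) / h + ε := by
        linarith [show (∫ x in 0..1, f x) / h = ∫ x in 0..1, f x / h from
          (intervalIntegral.integral_div _ _).symm]
    _ ≤ _ := by
        gcongr
        rw [div_le_iff₀' hh]
        exact hcover.trans hsum

end LipschitzCurve

structure IsSubdivision (n : ℕ) (t : ℕ → ℝ) : Prop where
  zero_eq : t 0 = 0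
  last_eq : t n = 1
  le_succ : ∀ i < n, t i ≤ t (i + 1)

namespace IsSubdivision

variable {n : ℕ} {t : ℕ → ℝ}

theorem Icc_subset (ht : IsSubdivision n t) {i : ℕ} (hi : i < n) :
    Icc (t i) (t (i + 1)) ⊆ Icc 0 1 := by
  have hmono : MonotoneOn t (Iic n) := monotoneOn_of_le_succ ordConnected_Iic
    fun j _ _ hj => by rw [Order.succ_eq_add_one] at hj ⊢; exact ht.le_succ j hj
  rw [← ht.zero_eq, ← ht.last_eq]
  exact Icc_subset_Icc (hmono (Nat.zero_le n) hi.le (Nat.zero_le i))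
    (hmono (show i + 1 ≤ n from hi) (le_refl n) hi)

theorem sum_integral (ht : IsSubdivision n t) {f : ℝ → ℝ}
    (hf : ∀ i < n, IntervalIntegrable f volume (t i) (t (i + 1))) :
    ∑ i ∈ Finset.range n, ∫ x in t i..t (i + 1), f x = ∫ x in 0..1, f x := by
  rw [sum_integral_adjacent_intervals hf, ht.zero_eq, ht.last_eq]

end IsSubdivision

def lowerSum {E : Type*} [NormedAddCommGroup E] (ψ : ℝ → ℝ) (σ : ℝ → E) (n : ℕ)
    (t : ℕ → ℝ) : ℝ :=
  ∑ i ∈ Finset.range n, sInf (ψ '' Icc (t i) (t (i + 1))) * ‖σ (t (i + 1)) - σ (t i)‖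

section WeightedLength

variable {E : Type*} [NormedAddCommGroup E] [NormedSpace ℝ E] [FiniteDimensional ℝ E]
  {K : NNReal} {σ : ℝ → E} {ψ : ℝ → ℝ}

theorem LipschitzOnWith.exists_subdivision_integral_norm_deriv_le
    (hσ : LipschitzOnWith K σ (Icc 0 1)) {δ ε : ℝ} (hδ : 0 < δ) (hε : 0 < ε) :
    ∃ n t, 0 < n ∧ IsSubdivision n t ∧ (∀ i < n, t (i + 1) - t i ≤ δ) ∧
      ∫ x in 0..1, ‖deriv σ x‖ ≤ ∑ i ∈ Finset.range n, ‖σ (t (i + 1)) - σ (t i)‖ + ε := by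
  -- `τ` is constant outside `[0, 1]`, so clamping a grid into `[0, 1]` keeps its polygon.
  set τ : ℝ → E := IccExtend zero_le_one ((Icc 0 1).domRestrict σ)
  have hτ : LipschitzWith K τ := by
    have := hσ.to_restrict.comp (LipschitzWith.projIcc zero_le_one)
    rwa [mul_one] at this
  have hτσ : ∫ x in 0..1, ‖deriv σ x‖ = ∫ x in 0..1, ‖deriv τ x‖ := by
    simp only [integral_of_le zero_le_one, integral_Ioc_eq_integral_Ioo]
    refine setIntegral_congr_fun measurableSet_Ioo fun x hx => ?_
    rw [EventuallyEq.deriv_eq]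
    filter_upwards [Ioo_mem_nhds hx.1 hx.2] with y hy
    exact (IccExtend_of_mem zero_le_one ((Icc 0 1).domRestrict σ) (Ioo_subset_Icc_self hy)).symm
  obtain ⟨m, hm, hmδ, s, hs, hlen⟩ := hτ.exists_grid_integral_norm_deriv_le hδ hε
  set h : ℝ := (m : ℝ)⁻¹
  have hh : 0 < h := inv_pos.2 (Nat.cast_pos.2 hm)
  have hmh : (m : ℝ) * h = 1 := mul_inv_cancel₀ (Nat.cast_ne_zero.2 hm.ne')
  refine ⟨m + 1, fun i => projIcc 0 1 zero_le_one (s + i * h), m.succ_pos, ⟨?_, ?_, ?_⟩, ?_, ?_⟩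
  · simp [projIcc_of_le_left _ hs.2]
  · rw [projIcc_of_right_le]
    push_cast
    rw [add_mul, one_mul, hmh]
    linarith [hs.1]
  · exact fun i _ => monotone_projIcc zero_le_one
      (show s + i * h ≤ s + ((i + 1 : ℕ) : ℝ) * h by gcongr; simp)
  · intro i _
    calc _ ≤ |s + ((i + 1 : ℕ) : ℝ) * h - (s + i * h)| :=
          (le_abs_self _).trans (abs_projIcc_sub_projIcc _)
      _ ≤ δ := by
          push_cast
          rwa [add_sub_add_left_eq_sub, ← sub_mul, add_sub_cancel_left, one_mul,
            abs_of_pos hh]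
  · rw [hτσ]
    refine hlen.trans_eq (congrArg (· + ε) (Finset.sum_congr rfl fun i _ => ?_))
    push_cast
    rfl

theorem LipschitzOnWith.sum_integral_mul_norm_deriv (hσ : LipschitzOnWith K σ (Icc 0 1))
    (hψ : ContinuousOn ψ (Icc 0 1)) {n : ℕ} {t : ℕ → ℝ} (ht : IsSubdivision n t) :
    ∑ i ∈ Finset.range n, ∫ x in t i..t (i + 1), ψ x * ‖deriv σ x‖ =
      ∫ x in 0..1, ψ x * ‖deriv σ x‖ :=
  ht.sum_integral fun i hi => (hσ.mono (ht.Icc_subset hi)).intervalIntegrable_mul_norm_deriv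
    (ht.le_succ i hi) (hψ.mono (ht.Icc_subset hi))

theorem LipschitzOnWith.lowerSum_le_integral (hσ : LipschitzOnWith K σ (Icc 0 1))
    (hψ : ContinuousOn ψ (Icc 0 1)) (hψ0 : ∀ u ∈ Icc 0 1, 0 ≤ ψ u) {n : ℕ} {t : ℕ → ℝ}
    (ht : IsSubdivision n t) :
    lowerSum ψ σ n t ≤ ∫ x in 0..1, ψ x * ‖deriv σ x‖ := by
  rw [← hσ.sum_integral_mul_norm_deriv hψ ht]
  refine Finset.sum_le_sum fun i hi => ?_
  have hsub := ht.Icc_subset (Finset.mem_range.1 hi)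
  exact (hσ.mono hsub).sInf_image_mul_norm_sub_le_integral (ht.le_succ i (Finset.mem_range.1 hi))
    (hψ.mono hsub) fun u hu => hψ0 u (hsub hu)

theorem LipschitzOnWith.integral_le_lowerSum_add {M δ ε : ℝ}
    (hσ : LipschitzOnWith K σ (Icc 0 1)) (hψ : ContinuousOn ψ (Icc 0 1))
    (hM : ∀ u ∈ Icc 0 1, ψ u ≤ M)
    (hosc : ∀ u ∈ Icc 0 1, ∀ w ∈ Icc 0 1, |u - w| ≤ δ → ψ u ≤ ψ w + ε)
    {n : ℕ} {t : ℕ → ℝ} (ht : IsSubdivision n t) (hmesh : ∀ i < n, t (i + 1) - t i ≤ δ) :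
    ∫ x in 0..1, ψ x * ‖deriv σ x‖ ≤ lowerSum ψ σ n t +
      M * ((∫ x in 0..1, ‖deriv σ x‖) - ∑ i ∈ Finset.range n, ‖σ (t (i + 1)) - σ (t i)‖) +
      ε * ∫ x in 0..1, ‖deriv σ x‖ := by
  have hpiece : ∀ i ∈ Finset.range n, ∫ x in t i..t (i + 1), ψ x * ‖deriv σ x‖ ≤
      sInf (ψ '' Icc (t i) (t (i + 1))) * ‖σ (t (i + 1)) - σ (t i)‖ +
        M * ((∫ x in t i..t (i + 1), ‖deriv σ x‖) - ‖σ (t (i + 1)) - σ (t i)‖) +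
        ε * ∫ x in t i..t (i + 1), ‖deriv σ x‖ := by
    intro i hi
    rw [Finset.mem_range] at hi
    have hsub := ht.Icc_subset hi
    refine (hσ.mono hsub).integral_mul_norm_deriv_le (ht.le_succ i hi) (hψ.mono hsub)
      (fun u hu => hM u (hsub hu)) fun u hu w hw => hosc u (hsub hu) w (hsub hw) ?_
    rw [abs_le]
    constructor <;> linarith [hu.1, hu.2, hw.1, hw.2, hmesh i hi]
  have hsum := Finset.sum_le_sum hpiece
  rw [hσ.sum_integral_mul_norm_deriv hψ ht] at hsum
  simp only [Finset.sum_add_distrib, ← Finset.mul_sum, Finset.sum_sub_distrib,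
    ht.sum_integral fun i hi => (hσ.mono (ht.Icc_subset hi)).intervalIntegrable_norm_deriv
      (ht.le_succ i hi)] at hsum
  exact hsum

theorem LipschitzOnWith.exists_integral_le_lowerSum_add (hσ : LipschitzOnWith K σ (Icc 0 1))
    (hψ : ContinuousOn ψ (Icc 0 1)) {ε : ℝ} (hε : 0 < ε) :
    ∃ n t, 0 < n ∧ IsSubdivision n t ∧
      ∫ x in 0..1, ψ x * ‖deriv σ x‖ ≤ lowerSum ψ σ n t + ε := by
  obtain ⟨M, hM⟩ := isCompact_Icc.exists_bound_of_continuousOn hψ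
  have hM0 : 0 ≤ M := (norm_nonneg _).trans (hM 0 (left_mem_Icc.2 zero_le_one))
  set L := ∫ x in 0..1, ‖deriv σ x‖
  have hL0 : 0 ≤ L := integral_nonneg zero_le_one fun _ _ => norm_nonneg _
  obtain ⟨δ, hδ, hψδ⟩ := Metric.uniformContinuousOn_iff_le.1
    (isCompact_Icc.uniformContinuousOn_of_continuous hψ) (ε / (2 * (L + 1))) (by positivity)
  have hosc : ∀ u ∈ Icc 0 1, ∀ w ∈ Icc 0 1, |u - w| ≤ δ → ψ u ≤ ψ w + ε / (2 * (L + 1)) := by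
    intro u hu w hw huw
    have hclose := hψδ u hu w hw huw
    rw [Real.dist_eq] at hclose
    linarith [le_abs_self (ψ u - ψ w)]
  obtain ⟨n, t, hn, ht, hmesh, hlen⟩ :=
    hσ.exists_subdivision_integral_norm_deriv_le hδ (ε := ε / (2 * (M + 1))) (by positivity)
  refine ⟨n, t, hn, ht, ?_⟩
  have hdefect : M * (L - ∑ i ∈ Finset.range n, ‖σ (t (i + 1)) - σ (t i)‖) ≤ ε / 2 :=
    calc _ ≤ M * (ε / (2 * (M + 1))) := mul_le_mul_of_nonneg_left (by linarith) hM0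
      _ ≤ ε / 2 := by
        rw [mul_div_assoc', div_le_div_iff₀ (by positivity) two_pos]
        nlinarith
  have hoscillation : ε / (2 * (L + 1)) * L ≤ ε / 2 := by
    rw [div_mul_eq_mul_div, div_le_div_iff₀ (by positivity) two_pos]
    nlinarith
  linarith [hσ.integral_le_lowerSum_add hψ (fun u hu => (le_abs_self _).trans (hM u hu)) hosc ht
    hmesh]

end WeightedLength

theorem weighted_length_eq_sup_subdivisions_general
    (Ωb : Set E2)
    (φ : E2 → ℝ) (hφ : ContinuousOn φ Ωb) (hφ0 : ∀ x ∈ Ωb, 0 ≤ φ x)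
    (σ : ℝ → E2) (hσ : IsCurveIn Ωb σ) :
    Lw φ σ = sSup {s : ℝ | ∃ n : ℕ, ∃ t : ℕ → ℝ, 0 < n ∧ t 0 = 0 ∧ t n = 1 ∧
      (∀ i < n, t i ≤ t (i + 1)) ∧
      s = ∑ i ∈ Finset.range n,
        sInf ((fun u => φ (σ u)) '' Icc (t i) (t (i + 1))) * ‖σ (t (i + 1)) - σ (t i)‖} := by
  obtain ⟨⟨K, hK⟩, hσΩ⟩ := hσ
  have hψ : ContinuousOn (fun u => φ (σ u)) (Icc 0 1) :=
    hφ.comp hK.continuousOn fun u hu => hσΩ u hu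
  have happrox := fun ε (hε : 0 < ε) => hK.exists_integral_le_lowerSum_add hψ hε
  refine (IsLUB.csSup_eq ⟨?_, fun c hc => ?_⟩ ?_).symm
  · rintro _ ⟨n, t, -, h0, h1, hmono, rfl⟩
    exact hK.lowerSum_le_integral hψ (fun u hu => hφ0 _ (hσΩ u hu)) ⟨h0, h1, hmono⟩
  · refine le_of_forall_pos_le_add fun ε hε => ?_
    obtain ⟨n, t, hn, ht, hle⟩ := happrox ε hε
    exact hle.trans (add_le_add_left (hc ⟨n, t, hn, ht.zero_eq, ht.last_eq, ht.le_succ, rfl⟩) ε)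
  · obtain ⟨n, t, hn, ht, -⟩ := happrox 1 one_pos
    exact ⟨_, n, t, hn, ht.zero_eq, ht.last_eq, ht.le_succ, rfl⟩

/-- the weighted length equals the supremum over subdivisions. -/
theorem weighted_length_eq_sup_subdivisions
    (Ωb : Set E2) (hΩc : IsCompact Ωb) (hΩconv : Convex ℝ Ωb)
    (φ : E2 → ℝ) (hφ : ContinuousOn φ Ωb) (hφ0 : ∀ x ∈ Ωb, 0 ≤ φ x)
    (σ : ℝ → E2) (hσ : IsCurveIn Ωb σ) :
    Lw φ σ = sSup {s : ℝ | ∃ n : ℕ, ∃ t : ℕ → ℝ, 0 < n ∧ t 0 = 0 ∧ t n = 1 ∧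
      (∀ i < n, t i ≤ t (i + 1)) ∧
      s = ∑ i ∈ Finset.range n,
        sInf ((fun u => φ (σ u)) '' Icc (t i) (t (i + 1))) * ‖σ (t (i + 1)) - σ (t i)‖} :=
  weighted_length_eq_sup_subdivisions_general Ωb φ hφ hφ0 σ hσ
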